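/- arXiv:2101.00684 — 3 statements merged into one kernel-verified Lean document; each statement's English description precedes it below -/
import Mathlib

section
/- Let μ > 0 and let N ≥ 2 be an even integer. Then the recursive sequences satisfy 0 < a_j < √2/μ, 0 < â_j < 1/μ, and 0 < b_j < 1/μ for all j = 1, …, N/2. -/
/-!
Both `a` and `b` iterate a map `x ↦ (q + x μ²) / (p q + x p μ² + μ²)` with `p, q > 0`, and this
map sends `[0, c/μ)` into itself as soon as `q ≤ c² p`. For `a` we have `q = p + 2` with `p ≥ 2`,
so `c = √2` works; for `b` we have `q < p`, so `c = 1` works. Finally `â_j = μ / D` with a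
denominator `D > μ²`.
-/

/-- The recursive sequence `a_j` (with `d_i = 2i`):
`a_j = (d_{N−2j+2} + a_{j−1}μ²)/(d_{N−2j+1}d_{N−2j+2} + a_{j−1}d_{N−2j+1}μ² + μ²)`, `a_0 = 0`. -/
noncomputable def aSeq (μ : ℝ) (N : ℕ) : ℕ → ℝ
  | 0 => 0
  | j + 1 =>
      (2 * ((N : ℝ) - 2 * ((j : ℝ) + 1) + 2) + aSeq μ N j * μ ^ 2) /
        (2 * ((N : ℝ) - 2 * ((j : ℝ) + 1) + 1) * (2 * ((N : ℝ) - 2 * ((j : ℝ) + 1) + 2)) +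
          aSeq μ N j * (2 * ((N : ℝ) - 2 * ((j : ℝ) + 1) + 1)) * μ ^ 2 + μ ^ 2)

/-- The recursive sequence `â_j`:
`â_j = μ/(d_{N−2j+1}d_{N−2j+2} + a_{j−1}d_{N−2j+1}μ² + μ²)`, `â_0 = 0`. -/
noncomputable def ahatSeq (μ : ℝ) (N : ℕ) : ℕ → ℝ
  | 0 => 0
  | j + 1 =>
      μ / (2 * ((N : ℝ) - 2 * ((j : ℝ) + 1) + 1) * (2 * ((N : ℝ) - 2 * ((j : ℝ) + 1) + 2)) +
          aSeq μ N j * (2 * ((N : ℝ) - 2 * ((j : ℝ) + 1) + 1)) * μ ^ 2 + μ ^ 2)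

/-- The recursive sequence `b_j`:
`b_j = (d_{2j−1} + b_{j−1}μ²)/(d_{2j}d_{2j−1} + b_{j−1}d_{2j}μ² + μ²)`, `b_0 = 0`. -/
noncomputable def bSeq (μ : ℝ) : ℕ → ℝ
  | 0 => 0
  | j + 1 =>
      (2 * (2 * ((j : ℝ) + 1) - 1) + bSeq μ j * μ ^ 2) /
        (2 * (2 * ((j : ℝ) + 1)) * (2 * (2 * ((j : ℝ) + 1) - 1)) +
          bSeq μ j * (2 * (2 * ((j : ℝ) + 1))) * μ ^ 2 + μ ^ 2)

noncomputable def recDenom (p q μ x : ℝ) : ℝ := p * q + x * p * μ ^ 2 + μ ^ 2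

noncomputable def recStep (p q μ x : ℝ) : ℝ := (q + x * μ ^ 2) / recDenom p q μ x

lemma aSeq_succ (μ : ℝ) (N j : ℕ) :
    aSeq μ N (j + 1) = recStep (2 * ((N : ℝ) - 2 * ((j : ℝ) + 1) + 1))
      (2 * ((N : ℝ) - 2 * ((j : ℝ) + 1) + 2)) μ (aSeq μ N j) := rfl

lemma ahatSeq_succ (μ : ℝ) (N j : ℕ) :
    ahatSeq μ N (j + 1) = μ / recDenom (2 * ((N : ℝ) - 2 * ((j : ℝ) + 1) + 1))
      (2 * ((N : ℝ) - 2 * ((j : ℝ) + 1) + 2)) μ (aSeq μ N j) := rfl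

lemma bSeq_succ (μ : ℝ) (j : ℕ) :
    bSeq μ (j + 1) =
      recStep (2 * (2 * ((j : ℝ) + 1))) (2 * (2 * ((j : ℝ) + 1) - 1)) μ (bSeq μ j) := rfl

section recStep

variable {p q μ x : ℝ}

lemma sq_lt_recDenom (hp : 0 < p) (hq : 0 < q) (hx : 0 ≤ x) : μ ^ 2 < recDenom p q μ x := by
  unfold recDenom
  have := mul_nonneg (mul_nonneg hx hp.le) (sq_nonneg μ)
  nlinarith [mul_pos hp hq]

lemma recDenom_pos (hp : 0 < p) (hq : 0 < q) (hx : 0 ≤ x) : 0 < recDenom p q μ x :=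
  (sq_nonneg μ).trans_lt (sq_lt_recDenom hp hq hx)

lemma recStep_pos (hp : 0 < p) (hq : 0 < q) (hx : 0 ≤ x) : 0 < recStep p q μ x :=
  div_pos (by positivity) (recDenom_pos hp hq hx)

lemma div_recDenom_lt_inv (hμ : 0 < μ) (hp : 0 < p) (hq : 0 < q) (hx : 0 ≤ x) :
    μ / recDenom p q μ x < 1 / μ := by
  rw [div_lt_div_iff₀ (recDenom_pos hp hq hx) hμ]
  simpa [sq] using sq_lt_recDenom (μ := μ) hp hq hx

/-- With `X = x μ`, the claim is `0 < (c - X) μ² + (c X p - q) μ + c p q`. This is clear when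
`q ≤ c X p`; otherwise the discriminant `(q + c X p)² - 4 c² p q` is negative, because
`q + c X p < 2 q ≤ 2 c √(p q)` by `q ≤ c² p`. -/
lemma recStep_mul_lt {c : ℝ} (hμ : 0 < μ) (hq : 0 < q) (hqp : q ≤ c ^ 2 * p) (hx : 0 ≤ x)
    (hxc : x * μ < c) : recStep p q μ x * μ < c := by
  have hc : 0 < c := (mul_nonneg hx hμ.le).trans_lt hxc
  have hp : 0 < p := pos_of_mul_pos_right (hq.trans_le hqp) (sq_nonneg c)
  rw [recStep, div_mul_eq_mul_div, div_lt_iff₀ (recDenom_pos hp hq hx), recDenom]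
  set X := x * μ
  have hX0 : 0 ≤ X := mul_nonneg hx hμ.le
  suffices 0 < (c - X) * μ ^ 2 + (c * X * p - q) * μ + c * p * q by
    nlinarith
  rcases le_or_gt q (c * X * p) with h | h
  · nlinarith [mul_pos hc (mul_pos hp hq), mul_pos (sub_pos.2 hxc) (mul_pos hμ hμ)]
  · nlinarith [sq_nonneg (2 * (c - X) * μ + (c * X * p - q)), mul_pos hp hq,
      mul_nonneg (mul_nonneg hc.le hX0) hp.le, mul_pos hq hq]

end recStep

lemma aSeq_nonneg_and_mul_lt_sqrt_two {μ : ℝ} (hμ : 0 < μ) (N : ℕ) :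
    ∀ j, 2 * j ≤ N → 0 ≤ aSeq μ N j ∧ aSeq μ N j * μ < √2
  | 0, _ => by simp [aSeq]
  | k + 1, hk => by
    obtain ⟨ha0, haμ⟩ := aSeq_nonneg_and_mul_lt_sqrt_two hμ N k (by omega)
    have hp : 2 ≤ 2 * ((N : ℝ) - 2 * ((k : ℝ) + 1) + 1) := by
      have : (2 * (k + 1) : ℝ) ≤ N := by exact_mod_cast hk
      linarith
    rw [aSeq_succ]
    refine ⟨(recStep_pos (by linarith) (by linarith) ha0).le,
      recStep_mul_lt hμ (by linarith) ?_ ha0 haμ⟩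
    rw [Real.sq_sqrt zero_le_two]
    linarith

lemma bSeq_nonneg_and_mul_lt_one {μ : ℝ} (hμ : 0 < μ) : ∀ j, 0 ≤ bSeq μ j ∧ bSeq μ j * μ < 1
  | 0 => by simp [bSeq]
  | k + 1 => by
    obtain ⟨hb0, hbμ⟩ := bSeq_nonneg_and_mul_lt_one hμ k
    have hk : (0 : ℝ) ≤ k := k.cast_nonneg
    rw [bSeq_succ]
    exact ⟨(recStep_pos (by linarith) (by linarith) hb0).le,
      recStep_mul_lt hμ (by linarith) (by linarith) hb0 hbμ⟩

theorem stmt3_general (μ : ℝ) (hμ : 0 < μ) (N : ℕ)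
    (j : ℕ) (hj1 : 1 ≤ j) (hj2 : j ≤ N / 2) :
    (0 < aSeq μ N j ∧ aSeq μ N j < Real.sqrt 2 / μ) ∧
    (0 < ahatSeq μ N j ∧ ahatSeq μ N j < 1 / μ) ∧
    (0 < bSeq μ j ∧ bSeq μ j < 1 / μ) := by
  obtain ⟨k, rfl⟩ : ∃ k, j = k + 1 := ⟨j - 1, by omega⟩
  obtain ⟨ha0, -⟩ := aSeq_nonneg_and_mul_lt_sqrt_two hμ N k (by omega)
  obtain ⟨-, haμ⟩ := aSeq_nonneg_and_mul_lt_sqrt_two hμ N (k + 1) (by omega)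
  obtain ⟨hb0, -⟩ := bSeq_nonneg_and_mul_lt_one hμ k
  obtain ⟨-, hbμ⟩ := bSeq_nonneg_and_mul_lt_one hμ (k + 1)
  have hp : 0 < 2 * ((N : ℝ) - 2 * ((k : ℝ) + 1) + 1) := by
    have : (2 * (k + 1) : ℝ) ≤ N := by exact_mod_cast (by omega : 2 * (k + 1) ≤ N)
    linarith
  have hk : (0 : ℝ) ≤ k := k.cast_nonneg
  refine ⟨⟨?_, (lt_div_iff₀ hμ).2 haμ⟩, ?_, ?_, (lt_div_iff₀ hμ).2 hbμ⟩
  · exact aSeq_succ μ N k ▸ recStep_pos hp (by linarith) ha0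
  · rw [ahatSeq_succ]
    exact ⟨div_pos hμ (recDenom_pos hp (by linarith) ha0),
      div_recDenom_lt_inv hμ hp (by linarith) ha0⟩
  · exact bSeq_succ μ k ▸ recStep_pos (by linarith) (by linarith) hb0

/-- Bounds `0 < a_j < √2/μ`, `0 < â_j < 1/μ`, `0 < b_j < 1/μ` for `j = 1,…,N/2`. -/
theorem stmt3 (μ : ℝ) (hμ : 0 < μ) (N : ℕ) (hN : 2 ≤ N) (hNe : Even N)
    (j : ℕ) (hj1 : 1 ≤ j) (hj2 : j ≤ N / 2) :
    (0 < aSeq μ N j ∧ aSeq μ N j < Real.sqrt 2 / μ) ∧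
    (0 < ahatSeq μ N j ∧ ahatSeq μ N j < 1 / μ) ∧
    (0 < bSeq μ j ∧ bSeq μ j < 1 / μ) :=
  stmt3_general μ hμ N j hj1 hj2
end

section
/- Let μ > 0, let N ≥ 2 be even, and let 1 ≤ n ≤ N/2. Let T̃ be the 2n×2n tridiagonal matrix with diagonal entries (d_{N−2n+1} + μ² b_{(N−2n)/2}, d_{N−2n+2}, d_{N−2n+3}, …, d_N), all subdiagonal entries equal to μ and all superdiagonal entries equal to −μ. Then T̃ is invertible, the 2×2 top-left block of T̃⁻¹ (rows 1–2, columns 1–2) equals Ĩ, and for every j = 1, …, n−1 and c ∈ {1,2}: (T̃⁻¹)_{2j+1, c} = −μ · a_{n−j} · (T̃⁻¹)_{2j, c} and (T̃⁻¹)_{2j+2, c} = μ · â_{n−j} · (T̃⁻¹)_{2j, c}. -/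
/-- The determinant `D = (d_{N−2n+2} + μ² a_{n−1})(d_{N−2n+1} + μ² b_{(N−2n)/2}) + μ²`. -/
noncomputable def Dden (μ : ℝ) (N n : ℕ) : ℝ :=
  (2 * (((N - 2 * n : ℕ) : ℝ) + 2) + μ ^ 2 * aSeq μ N (n - 1)) *
      (2 * (((N - 2 * n : ℕ) : ℝ) + 1) + μ ^ 2 * bSeq μ ((N - 2 * n) / 2)) + μ ^ 2

/-- The `2 × 2` matrix `Ĩ = (1/D)·[[d_{N−2n+2} + μ² a_{n−1}, μ], [−μ, d_{N−2n+1} + μ² b_{(N−2n)/2}]]`. -/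
noncomputable def Itil (μ : ℝ) (N n : ℕ) : Matrix (Fin 2) (Fin 2) ℝ :=
  !![(2 * (((N - 2 * n : ℕ) : ℝ) + 2) + μ ^ 2 * aSeq μ N (n - 1)) / Dden μ N n,
      μ / Dden μ N n;
     -μ / Dden μ N n,
      (2 * (((N - 2 * n : ℕ) : ℝ) + 1) + μ ^ 2 * bSeq μ ((N - 2 * n) / 2)) / Dden μ N n]

/-- The `2n × 2n` tridiagonal matrix `T̃` with diagonal
`(d_{N−2n+1} + μ² b_{(N−2n)/2}, d_{N−2n+2}, …, d_N)`, subdiagonal `μ`, superdiagonal `-μ`. -/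
noncomputable def Ttil (μ : ℝ) (N n : ℕ) : Matrix (Fin (2 * n)) (Fin (2 * n)) ℝ :=
  Matrix.of fun i j =>
    if (i : ℕ) = (j : ℕ) then
      (if (i : ℕ) = 0 then
        2 * (((N - 2 * n : ℕ) : ℝ) + 1) + μ ^ 2 * bSeq μ ((N - 2 * n) / 2)
       else 2 * (((N - 2 * n : ℕ) : ℝ) + 1 + ((i : ℕ) : ℝ)))
    else if (i : ℕ) = (j : ℕ) + 1 then μ
    else if (j : ℕ) = (i : ℕ) + 1 then -μ
    else 0

namespace Matrix

variable {R : Type*}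

def tridiag [Zero R] (m : ℕ) (d : ℕ → R) (l u : R) : Matrix (Fin m) (Fin m) R :=
  of fun i j =>
    if (i : ℕ) = j then d i else if (i : ℕ) = j + 1 then l else if (j : ℕ) = i + 1 then u else 0

theorem tridiag_mulVec_apply [Semiring R] (m : ℕ) (d : ℕ → R) (l u : R) (x : ℕ → R)
    (hx : x m = 0) (i : Fin m) :
    (tridiag m d l u *ᵥ fun j => x j) i
      = (if (i : ℕ) = 0 then 0 else l * x (i - 1)) + d i * x i + u * x (i + 1) := by
  have hsplit : ∀ j : ℕ, (if (i : ℕ) = j then d i else if (i : ℕ) = j + 1 then l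
      else if j = i + 1 then u else 0) * x j
      = (if j = i then d i * x j else 0) + (if j + 1 = i then l * x j else 0)
        + (if j = i + 1 then u * x j else 0) := by
    intro j; split_ifs <;> first | omega | simp
  simp only [mulVec, dotProduct, tridiag, of_apply]
  rw [Fin.sum_univ_eq_sum_range (fun j => (if (i : ℕ) = j then d i
      else if (i : ℕ) = j + 1 then l else if j = i + 1 then u else 0) * x j), Finset.sum_congr rfl fun j _ => hsplit j,
    Finset.sum_add_distrib, Finset.sum_add_distrib, Finset.sum_ite_eq', Finset.sum_ite_eq',
    if_pos (Finset.mem_range.2 i.2)]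
  have hsub : (∑ j ∈ Finset.range m, if j + 1 = (i : ℕ) then l * x j else 0)
      = if (i : ℕ) = 0 then 0 else l * x (i - 1) := by
    obtain ⟨i, hi⟩ := i
    cases i with
    | zero => simp
    | succ k => simp [Finset.sum_ite_eq', show k < m by omega]
  have hsup : (if (i : ℕ) + 1 ∈ Finset.range m then u * x (i + 1) else 0) = u * x (i + 1) := by
    split_ifs with h
    · rfl
    · rw [show (i : ℕ) + 1 = m by rw [Finset.mem_range] at h; omega, hx, mul_zero]
  rw [hsub, hsup]
  abel

theorem det_diagonal_add_ne_zero_of_transpose_eq_neg {n : Type*} [Fintype n] [DecidableEq n]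
    [CommRing R] [LinearOrder R] [IsStrictOrderedRing R] {d : n → R} (hd : ∀ i, 0 < d i)
    {A : Matrix n n R} (hA : Aᵀ = -A) : (diagonal d + A).det ≠ 0 := by
  intro hdet
  obtain ⟨v, hv0, hv⟩ := exists_mulVec_eq_zero_iff.mpr hdet
  have hskew : v ⬝ᵥ (A *ᵥ v) = 0 := by
    have h : v ⬝ᵥ (A *ᵥ v) = -(v ⬝ᵥ (A *ᵥ v)) := by
      conv_lhs => rw [dotProduct_mulVec, ← mulVec_transpose, hA, neg_mulVec, neg_dotProduct,
        dotProduct_comm]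
    linarith
  have hsum : ∑ i, d i * v i ^ 2 = 0 := by
    have h : v ⬝ᵥ ((diagonal d + A) *ᵥ v) = 0 := by rw [hv, dotProduct_zero]
    rw [add_mulVec, dotProduct_add, hskew, add_zero] at h
    rw [← h]
    exact Finset.sum_congr rfl fun i _ => by rw [mulVec_diagonal]; ring
  refine hv0 (funext fun i => ?_)
  have hi := (Finset.sum_eq_zero_iff_of_nonneg fun j _ =>
    mul_nonneg (hd j).le (sq_nonneg (v j))).mp hsum i (Finset.mem_univ i)
  simpa [(hd i).ne'] using hi

theorem tridiag_eq_diagonal_add [AddZeroClass R] (m : ℕ) (d : ℕ → R) (l u : R) :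
    tridiag m d l u = diagonal (fun i : Fin m => d i) + tridiag m 0 l u := by
  ext i j
  simp only [tridiag, add_apply, diagonal_apply, of_apply, Fin.ext_iff]
  split_ifs <;> simp_all

theorem transpose_tridiag [Zero R] (m : ℕ) (d : ℕ → R) (l u : R) :
    (tridiag m d l u)ᵀ = tridiag m d u l := by
  ext i j
  simp only [tridiag, transpose_apply, of_apply]
  split_ifs with h <;> first | rfl | omega | rw [h]

theorem neg_tridiag [NegZeroClass R] (m : ℕ) (d : ℕ → R) (l u : R) :
    -tridiag m d l u = tridiag m (-d) (-l) (-u) := by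
  ext i j
  simp only [tridiag, neg_apply, of_apply, Pi.neg_apply]
  split_ifs <;> simp

theorem det_tridiag_ne_zero [CommRing R] [LinearOrder R] [IsStrictOrderedRing R] {m : ℕ}
    {d : ℕ → R} (hd : ∀ i < m, 0 < d i) (l : R) : (tridiag m d l (-l)).det ≠ 0 := by
  rw [tridiag_eq_diagonal_add]
  exact det_diagonal_add_ne_zero_of_transpose_eq_neg (d := fun i : Fin m => d i) (fun i => hd i i.2)
    (by rw [transpose_tridiag, neg_tridiag, neg_zero, neg_neg])

theorem inv_apply_of_mulVec_eq_single {n : Type*} [Fintype n] [DecidableEq n] [CommRing R]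
    {M : Matrix n n R} (hM : IsUnit M.det) {x : n → R} {c : n} (h : M *ᵥ x = Pi.single c 1)
    (i : n) : M⁻¹ i c = x i := by
  have h' := congrArg (M⁻¹ *ᵥ ·) h
  simp only [mulVec_mulVec, nonsing_inv_mul _ hM, one_mulVec, mulVec_single_one] at h'
  exact (congrFun h' i).symm

end Matrix

open Matrix

/- `aSeq` and `bSeq` are both iterates of `x ↦ (p + x μ²) / (q p + x q μ² + μ²)`, and `ahatSeq`
has the same denominator. -/

theorem recStep_nonneg {p q μ x : ℝ} (hp : 0 ≤ p) (hq : 0 ≤ q) (hx : 0 ≤ x) :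
    0 ≤ (p + x * μ ^ 2) / (q * p + x * q * μ ^ 2 + μ ^ 2) := by
  positivity

theorem recStep_denom_pos {p q μ x : ℝ} (hp : 0 < p) (hq : 0 < q) (hx : 0 ≤ x) :
    0 < q * p + x * q * μ ^ 2 + μ ^ 2 := by
  positivity

theorem recStep_identity {p q μ x : ℝ} (hD : q * p + x * q * μ ^ 2 + μ ^ 2 ≠ 0) :
    q * ((p + x * μ ^ 2) / (q * p + x * q * μ ^ 2 + μ ^ 2))
      + μ * (μ / (q * p + x * q * μ ^ 2 + μ ^ 2)) = 1 := by
  rw [mul_div_assoc', mul_div_assoc', ← add_div, div_eq_one_iff_eq hD]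
  ring

theorem bSeq_nonneg (μ : ℝ) (k : ℕ) : 0 ≤ bSeq μ k := by
  induction k with
  | zero => rfl
  | succ j ih =>
    have hj : (0 : ℝ) ≤ j := j.cast_nonneg
    exact recStep_nonneg (by linarith) (by positivity) ih

theorem aSeq_nonneg (μ : ℝ) {N j : ℕ} (h : 2 * j ≤ N) : 0 ≤ aSeq μ N j := by
  induction j with
  | zero => rfl
  | succ j ih =>
    have hN : (2 * ((j : ℝ) + 1)) ≤ N := by exact_mod_cast h
    exact recStep_nonneg (by linarith) (by linarith) (ih (by omega))

theorem aSeq_denom_pos (μ : ℝ) {N j : ℕ} (h : 2 * (j + 1) ≤ N) :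
    0 < 2 * ((N : ℝ) - 2 * ((j : ℝ) + 1) + 1) * (2 * ((N : ℝ) - 2 * ((j : ℝ) + 1) + 2)) +
      aSeq μ N j * (2 * ((N : ℝ) - 2 * ((j : ℝ) + 1) + 1)) * μ ^ 2 + μ ^ 2 := by
  have hN : (2 * ((j : ℝ) + 1)) ≤ N := by exact_mod_cast h
  exact recStep_denom_pos (by linarith) (by linarith) (aSeq_nonneg μ (by omega))

theorem aSeq_succ_identity (μ : ℝ) {N j : ℕ} (h : 2 * (j + 1) ≤ N) :
    2 * ((N : ℝ) - 2 * ((j : ℝ) + 1) + 1) * aSeq μ N (j + 1) + μ * ahatSeq μ N (j + 1) = 1 := by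
  rw [aSeq, ahatSeq]
  exact recStep_identity (aSeq_denom_pos μ h).ne'

theorem ahatSeq_succ_identity (μ : ℝ) (N j : ℕ) :
    (2 * ((N : ℝ) - 2 * ((j : ℝ) + 1) + 2) + μ ^ 2 * aSeq μ N j) * ahatSeq μ N (j + 1)
      = μ * aSeq μ N (j + 1) := by
  rw [aSeq, ahatSeq]
  ring

noncomputable def TtilDiag (μ : ℝ) (N n i : ℕ) : ℝ :=
  if i = 0 then 2 * (((N - 2 * n : ℕ) : ℝ) + 1) + μ ^ 2 * bSeq μ ((N - 2 * n) / 2)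
  else 2 * (((N - 2 * n : ℕ) : ℝ) + 1 + (i : ℝ))

theorem Ttil_eq_tridiag (μ : ℝ) (N n : ℕ) :
    Ttil μ N n = tridiag (2 * n) (TtilDiag μ N n) μ (-μ) :=
  rfl

theorem TtilDiag_pos (μ : ℝ) (N n i : ℕ) : 0 < TtilDiag μ N n i := by
  have hb := mul_nonneg (sq_nonneg μ) (bSeq_nonneg μ ((N - 2 * n) / 2))
  unfold TtilDiag
  split_ifs <;> positivity

theorem isUnit_det_Ttil (μ : ℝ) (N n : ℕ) : IsUnit (Ttil μ N n).det := by
  rw [isUnit_iff_ne_zero, Ttil_eq_tridiag]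
  exact det_tridiag_ne_zero (fun i _ => TtilDiag_pos μ N n i) μ

theorem Dden_pos (μ : ℝ) {N n : ℕ} (h : 2 * n ≤ N) : 0 < Dden μ N n := by
  have ha := mul_nonneg (sq_nonneg μ) (aSeq_nonneg μ (N := N) (j := n - 1) (by omega))
  have hb := mul_nonneg (sq_nonneg μ) (bSeq_nonneg μ ((N - 2 * n) / 2))
  have hK : (0 : ℝ) ≤ ((N - 2 * n : ℕ) : ℝ) := Nat.cast_nonneg _
  exact add_pos_of_pos_of_nonneg (mul_pos (by linarith) (by linarith)) (sq_nonneg μ)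

theorem mul_Itil_eq_one (μ : ℝ) {N n : ℕ} (h : 2 * n ≤ N) :
    !![TtilDiag μ N n 0, -μ; μ, TtilDiag μ N n 1 + μ ^ 2 * aSeq μ N (n - 1)] * Itil μ N n
      = 1 := by
  have hD := (Dden_pos μ h).ne'
  rw [TtilDiag, TtilDiag, if_pos rfl, if_neg one_ne_zero, Nat.cast_one, Itil, mul_fin_two,
    one_fin_two]
  simp only [EmbeddingLike.apply_eq_iff_eq, vecCons_inj, and_true]
  refine ⟨⟨?_, ?_⟩, ?_, ?_⟩ <;> field_simp <;> unfold Dden <;> ring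

/- The candidate `c`-th column of `T̃⁻¹`, with 0-based row indices: `oddCol j` is the entry in
row `2j+1`. -/
noncomputable def oddCol (μ : ℝ) (N n : ℕ) (c : Fin 2) : ℕ → ℝ
  | 0 => Itil μ N n 1 c
  | j + 1 => μ * ahatSeq μ N (n - (j + 1)) * oddCol μ N n c j

noncomputable def invCol (μ : ℝ) (N n : ℕ) (c : Fin 2) (i : ℕ) : ℝ :=
  if i = 0 then Itil μ N n 0 c
  else if i % 2 = 1 then oddCol μ N n c (i / 2)
  else -μ * aSeq μ N (n - i / 2) * oddCol μ N n c (i / 2 - 1)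

section invCol

variable (μ : ℝ) (N n : ℕ) (c : Fin 2)

theorem invCol_zero : invCol μ N n c 0 = Itil μ N n 0 c := rfl

theorem invCol_odd (j : ℕ) : invCol μ N n c (2 * j + 1) = oddCol μ N n c j := by
  rw [invCol, if_neg (by omega), if_pos (by omega), show (2 * j + 1) / 2 = j by omega]

theorem invCol_even (j : ℕ) :
    invCol μ N n c (2 * j + 2) = -μ * aSeq μ N (n - (j + 1)) * oddCol μ N n c j := by
  rw [invCol, if_neg (by omega), if_neg (by omega), show (2 * j + 2) / 2 = j + 1 by omega,
    Nat.add_sub_cancel]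

theorem invCol_one : invCol μ N n c 1 = Itil μ N n 1 c := invCol_odd μ N n c 0

theorem invCol_two : invCol μ N n c 2 = -μ * aSeq μ N (n - 1) * Itil μ N n 1 c :=
  invCol_even μ N n c 0

/- The column vanishes just past its end, so the last row of `T̃` needs no separate treatment. -/
theorem invCol_two_mul (hn : 1 ≤ n) : invCol μ N n c (2 * n) = 0 := by
  obtain ⟨j, rfl⟩ := Nat.exists_eq_add_of_le' hn
  rw [show 2 * (j + 1) = 2 * j + 2 by ring, invCol_even, Nat.sub_self, aSeq, mul_zero, zero_mul]

end invCol

theorem invCol_row_even (μ : ℝ) {N n k : ℕ} (hk : k + 1 < n) (h : 2 * n ≤ N) (c : Fin 2) :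
    μ * invCol μ N n c (2 * k + 1) + TtilDiag μ N n (2 * k + 2) * invCol μ N n c (2 * k + 2)
      + -μ * invCol μ N n c (2 * k + 3) = 0 := by
  obtain ⟨j, rfl⟩ : ∃ j, n = j + k + 2 := ⟨n - k - 2, by omega⟩
  have hI := aSeq_succ_identity μ (N := N) (j := j) (by omega)
  rw [invCol_odd, invCol_even, show 2 * k + 3 = 2 * (k + 1) + 1 by ring, invCol_odd, oddCol,
    TtilDiag, if_neg (by omega), show j + k + 2 - (k + 1) = j + 1 by omega]
  rw [Nat.cast_sub h] at *
  push_cast at hI ⊢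
  linear_combination (-(μ * oddCol μ N (j + k + 2) c k)) * hI

theorem invCol_row_odd (μ : ℝ) {N n k : ℕ} (hk : k + 1 < n) (h : 2 * n ≤ N) (c : Fin 2) :
    μ * invCol μ N n c (2 * k + 2) + TtilDiag μ N n (2 * k + 3) * invCol μ N n c (2 * k + 3)
      + -μ * invCol μ N n c (2 * k + 4) = 0 := by
  obtain ⟨j, rfl⟩ : ∃ j, n = j + k + 2 := ⟨n - k - 2, by omega⟩
  have hI := ahatSeq_succ_identity μ N j
  rw [invCol_even, show 2 * k + 3 = 2 * (k + 1) + 1 by ring, invCol_odd,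
    show 2 * k + 4 = 2 * (k + 1) + 2 by ring, invCol_even, oddCol, TtilDiag, if_neg (by omega),
    show j + k + 2 - (k + 1) = j + 1 by omega, show j + k + 2 - (k + 1 + 1) = j by omega]
  rw [Nat.cast_sub h] at *
  push_cast at hI ⊢
  linear_combination (μ * oddCol μ N (j + k + 2) c k) * hI

theorem Ttil_mulVec_invCol (μ : ℝ) {N n : ℕ} (hn : 1 ≤ n) (h : 2 * n ≤ N) (c : Fin 2) :
    Ttil μ N n *ᵥ (fun i => invCol μ N n c i) = Pi.single ⟨c, by omega⟩ 1 := by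
  have hone (r : Fin 2) (hr : (r : ℕ) < 2 * n) :
      Pi.single (M := fun _ => ℝ) (⟨c, by omega⟩ : Fin (2 * n)) 1 ⟨r, hr⟩
        = (1 : Matrix (Fin 2) (Fin 2) ℝ) r c := by
    simp only [Pi.single_apply, one_apply, Fin.ext_iff]
  funext ⟨i, hi⟩
  rw [Ttil_eq_tridiag, tridiag_mulVec_apply _ _ _ _ _ (invCol_two_mul μ N n c hn)]
  obtain rfl | rfl | ⟨k, rfl | rfl⟩ : i = 0 ∨ i = 1 ∨ ∃ k, i = 2 * k + 2 ∨ i = 2 * k + 3 := by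
    rcases Nat.lt_or_ge i 2 with h | h
    · omega
    · exact Or.inr (Or.inr ⟨(i - 2) / 2, by omega⟩)
  all_goals dsimp only
  · have hS := congrFun (congrFun (mul_Itil_eq_one μ h) 0) c
    simp only [mul_apply, Fin.sum_univ_two, of_apply, cons_val', cons_val_fin_one, cons_val_zero,
      cons_val_one] at hS
    rw [if_pos rfl, zero_add, invCol_zero, invCol_one]
    exact hS.trans (hone 0 hi).symm
  · have hS := congrFun (congrFun (mul_Itil_eq_one μ h) 1) c
    simp only [mul_apply, Fin.sum_univ_two, of_apply, cons_val', cons_val_fin_one, cons_val_zero,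
      cons_val_one] at hS
    rw [if_neg one_ne_zero, Nat.sub_self, one_add_one_eq_two, invCol_zero, invCol_one, invCol_two]
    refine Eq.trans ?_ (hone 1 hi).symm
    linear_combination hS
  · rw [if_neg (by omega), show 2 * k + 2 - 1 = 2 * k + 1 by omega,
      invCol_row_even μ (k := k) (by omega) h, Pi.single_apply,
      if_neg (Fin.ne_of_val_ne (by dsimp only; omega))]
  · rw [if_neg (by omega), show 2 * k + 3 - 1 = 2 * k + 2 by omega,
      invCol_row_odd μ (k := k) (by omega) h, Pi.single_apply,
      if_neg (Fin.ne_of_val_ne (by dsimp only; omega))]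

/-- `T̃` is invertible, the top-left `2 × 2` block of `T̃⁻¹` is `Ĩ`, and the first two
columns of `T̃⁻¹` obey the recursions
`(T̃⁻¹)_{2j+1,c} = −μ a_{n−j} (T̃⁻¹)_{2j,c}` and `(T̃⁻¹)_{2j+2,c} = μ â_{n−j} (T̃⁻¹)_{2j,c}`
(1-based indices). -/
theorem stmt6 (μ : ℝ) (N : ℕ)
    (n : ℕ) (hn1 : 1 ≤ n) (hn2 : n ≤ N / 2) :
    IsUnit (Ttil μ N n) ∧
    (∀ r s : Fin 2,
      (Ttil μ N n)⁻¹ ⟨(r : ℕ), by have := r.isLt; omega⟩ ⟨(s : ℕ), by have := s.isLt; omega⟩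
        = Itil μ N n r s) ∧
    (∀ j : ℕ, ∀ _hj1 : 1 ≤ j, ∀ _hj2 : j ≤ n - 1, ∀ c : Fin 2,
      ((Ttil μ N n)⁻¹ ⟨2 * j, by omega⟩ ⟨(c : ℕ), by have := c.isLt; omega⟩
          = -μ * aSeq μ N (n - j) *
            (Ttil μ N n)⁻¹ ⟨2 * j - 1, by omega⟩ ⟨(c : ℕ), by have := c.isLt; omega⟩) ∧
      ((Ttil μ N n)⁻¹ ⟨2 * j + 1, by omega⟩ ⟨(c : ℕ), by have := c.isLt; omega⟩
          = μ * ahatSeq μ N (n - j) *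
            (Ttil μ N n)⁻¹ ⟨2 * j - 1, by omega⟩ ⟨(c : ℕ), by have := c.isLt; omega⟩)) := by
  have hcol (c : Fin 2) (i : Fin (2 * n)) :
      (Ttil μ N n)⁻¹ i ⟨c, by omega⟩ = invCol μ N n c i :=
    inv_apply_of_mulVec_eq_single (isUnit_det_Ttil μ N n)
      (Ttil_mulVec_invCol μ hn1 (by omega) c) i
  refine ⟨(isUnit_iff_isUnit_det _).2 (isUnit_det_Ttil μ N n), fun r s => ?_,
    fun j hj1 _ c => ?_⟩
  · rw [hcol]
    fin_cases r
    exacts [invCol_zero μ N n s, invCol_one μ N n s]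
  · obtain ⟨k, rfl⟩ : ∃ k, j = k + 1 := ⟨j - 1, by omega⟩
    simp only [hcol]
    rw [show 2 * (k + 1) - 1 = 2 * k + 1 by omega, show 2 * (k + 1) = 2 * k + 2 by ring,
      invCol_even, invCol_odd, show 2 * k + 2 + 1 = 2 * (k + 1) + 1 by ring, invCol_odd, oddCol]
    exact ⟨rfl, rfl⟩
end

section
/- Let T be an invertible N×N real tridiagonal matrix whose subdiagonal and superdiagonal entries satisfy T_{j+1,j} = −T_{j,j+1} for all j, and whose entries outside the three central diagonals are zero. Then for all indices 1 ≤ j ≤ N and integers i > 0 for which the indices are valid (j + 2i + 1 ≤ N, respectively 1 ≤ j − 2i + 1): (T⁻¹)_{j+2i, j} = (T⁻¹)_{j, j+2i}, (T⁻¹)_{j+2i+1, j} = −(T⁻¹)_{j, j+2i+1}, (T⁻¹)_{j−2i, j} = (T⁻¹)_{j, j−2i}, and (T⁻¹)_{j−2i+1, j} = −(T⁻¹)_{j, j−2i+1}. -/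
/-!
Conjugating by the sign matrix `D = diag((-1)^i)` multiplies the `(a, b)` entry by
`(-1)^(a+b)`. For a tridiagonal `T` with antisymmetric off-diagonal this turns `T` into `Tᵀ`,
and since `D⁻¹ = D` the same identity `D T⁻¹ D = (T⁻¹)ᵀ` passes to the inverse, i.e.
`T⁻¹ b a = (-1)^(a+b) T⁻¹ a b`. The four relations are the cases of even and odd `a + b`.
-/

namespace Matrix

def altSign (R : Type*) [CommRing R] (n : ℕ) : Matrix (Fin n) (Fin n) R :=
  diagonal fun i => (-1) ^ (i : ℕ)

variable {n : ℕ} {R : Type*} [CommRing R]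

theorem altSign_mul_altSign : altSign R n * altSign R n = 1 := by
  rw [altSign, diagonal_mul_diagonal, ← diagonal_one]
  congr 1
  ext i
  rw [← pow_add, Even.neg_one_pow ⟨_, rfl⟩]

theorem altSign_mul_mul_altSign_apply (A : Matrix (Fin n) (Fin n) R) (a b : Fin n) :
    (altSign R n * A * altSign R n) a b = (-1) ^ ((a : ℕ) + b) * A a b := by
  simp only [altSign, diagonal_mul, mul_diagonal, pow_add]
  ring

theorem altSign_mul_mul_altSign_eq_transpose_iff {A : Matrix (Fin n) (Fin n) R} :
    altSign R n * A * altSign R n = Aᵀ ↔ ∀ a b : Fin n, A b a = (-1) ^ ((a : ℕ) + b) * A a b := by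
  simp only [← Matrix.ext_iff, altSign_mul_mul_altSign_apply, transpose_apply, eq_comm]

theorem inv_conj_eq_transpose_inv {m : Type*} [Fintype m] [DecidableEq m]
    {D A : Matrix m m R} (hD : D * D = 1) (hA : D * A * D = Aᵀ) :
    D * A⁻¹ * D = (A⁻¹)ᵀ := by
  rw [transpose_nonsing_inv, ← hA, mul_inv_rev, mul_inv_rev, inv_eq_right_inv hD, mul_assoc]

theorem altSign_mul_mul_altSign_eq_transpose_of_tridiagonal {T : Matrix (Fin n) (Fin n) R}
    (htri : ∀ i j : Fin n, ((i : ℕ) + 2 ≤ (j : ℕ) ∨ (j : ℕ) + 2 ≤ (i : ℕ)) → T i j = 0)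
    (hanti : ∀ i j : Fin n, (j : ℕ) = (i : ℕ) + 1 → T j i = -T i j) :
    altSign R n * T * altSign R n = Tᵀ := by
  rw [altSign_mul_mul_altSign_eq_transpose_iff]
  intro a b
  rcases lt_trichotomy (a : ℕ) b with hab | hab | hab
  · by_cases hb : (b : ℕ) = a + 1
    · rw [hanti a b hb, hb, Odd.neg_one_pow ⟨a, by ring⟩, neg_one_mul]
    · rw [htri a b (Or.inl (by omega)), htri b a (Or.inr (by omega)), mul_zero]
  · rw [Fin.ext hab, Even.neg_one_pow ⟨_, rfl⟩, one_mul]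
  · by_cases ha : (a : ℕ) = b + 1
    · rw [hanti b a ha, ha, Odd.neg_one_pow ⟨b, by ring⟩, neg_one_mul, neg_neg]
    · rw [htri a b (Or.inr (by omega)), htri b a (Or.inl (by omega)), mul_zero]

theorem inv_apply_swap_of_tridiagonal {T : Matrix (Fin n) (Fin n) R}
    (htri : ∀ i j : Fin n, ((i : ℕ) + 2 ≤ (j : ℕ) ∨ (j : ℕ) + 2 ≤ (i : ℕ)) → T i j = 0)
    (hanti : ∀ i j : Fin n, (j : ℕ) = (i : ℕ) + 1 → T j i = -T i j) (a b : Fin n) :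
    T⁻¹ b a = (-1) ^ ((a : ℕ) + b) * T⁻¹ a b :=
  altSign_mul_mul_altSign_eq_transpose_iff.mp
    (inv_conj_eq_transpose_inv altSign_mul_altSign
      (altSign_mul_mul_altSign_eq_transpose_of_tridiagonal htri hanti)) a b

end Matrix

-- Indices are 0-based: the index `j` here is the paper's `j + 1`.
/-- Symmetry relations for the inverse of an invertible tridiagonal matrix whose
off-diagonal entries are antisymmetric (`T_{j+1,j} = −T_{j,j+1}`).  Indices are 0-based:
the 0-based index `j` corresponds to the 1-based index `j+1` of the paper. -/
theorem stmt7 (N : ℕ) (T : Matrix (Fin N) (Fin N) ℝ)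
    (htri : ∀ i j : Fin N, ((i : ℕ) + 2 ≤ (j : ℕ) ∨ (j : ℕ) + 2 ≤ (i : ℕ)) → T i j = 0)
    (hanti : ∀ i j : Fin N, (j : ℕ) = (i : ℕ) + 1 → T j i = -T i j) :
    ∀ j : ℕ, ∀ hj : j < N, ∀ i : ℕ, ∀ _hi : 1 ≤ i,
      (∀ h : j + 2 * i < N,
        T⁻¹ ⟨j + 2 * i, h⟩ ⟨j, hj⟩ = T⁻¹ ⟨j, hj⟩ ⟨j + 2 * i, h⟩) ∧
      (∀ h : j + 2 * i + 1 < N,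
        T⁻¹ ⟨j + 2 * i + 1, h⟩ ⟨j, hj⟩ = -T⁻¹ ⟨j, hj⟩ ⟨j + 2 * i + 1, h⟩) ∧
      (∀ _h : 2 * i ≤ j,
        T⁻¹ ⟨j - 2 * i, by omega⟩ ⟨j, hj⟩ = T⁻¹ ⟨j, hj⟩ ⟨j - 2 * i, by omega⟩) ∧
      (∀ _h : 2 * i ≤ j + 1,
        T⁻¹ ⟨j + 1 - 2 * i, by omega⟩ ⟨j, hj⟩ = -T⁻¹ ⟨j, hj⟩ ⟨j + 1 - 2 * i, by omega⟩) := by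
  intro j hj i _
  have swap : ∀ k (hk : k < N), T⁻¹ ⟨k, hk⟩ ⟨j, hj⟩ = (-1) ^ (j + k) * T⁻¹ ⟨j, hj⟩ ⟨k, hk⟩ :=
    fun k hk => Matrix.inv_apply_swap_of_tridiagonal htri hanti ⟨j, hj⟩ ⟨k, hk⟩
  refine ⟨fun h => ?_, fun h => ?_, fun h => ?_, fun h => ?_⟩
  · rw [swap, Even.neg_one_pow ⟨j + i, by ring⟩, one_mul]
  · rw [swap, Odd.neg_one_pow ⟨j + i, by ring⟩, neg_one_mul]
  · rw [swap, Even.neg_one_pow ⟨j - i, by omega⟩, one_mul]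
  · rw [swap, Odd.neg_one_pow ⟨j - i, by omega⟩, neg_one_mul]
end
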